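/- arXiv:2206.06312 — 8 statements merged into one kernel-verified Lean document; each statement's English description precedes it below -/
import Mathlib

section
/- For every positive integer d, the polynomial H_d(x1,...,x5) = h(x1^d, ..., x5^d), where h is the Horn polynomial, is not a sum of squares of real polynomials. -/
/-!
Restrict a putative decomposition `H_d = ∑ⱼ gⱼ²` to the slice `x_k = s`, `x_{k+1} = a`,
`x_{k-1} = b` (other coordinates `0`): there `H_d` becomes `(s^d - a^d - b^d)²`. This Fermat
polynomial is irreducible over `ℝ[a, b]` (Eisenstein at a simple prime factor of `a^d + b^d`) and
its real points are Zariski dense, so it divides every restricted `gⱼ`. Restricting further to the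
`s`- and to the `a`-axis shows that the constant term `cⱼ(k)` of the cofactor satisfies
`cⱼ(k + 1) = -cⱼ(k)`; around the odd cycle `ℤ/5` this forces `cⱼ = 0`, whereas on the `x₀`-axis
the decomposition reads `∑ⱼ (t^d (cⱼ(0) + O(t)))² = t^{2d}`, i.e. `∑ⱼ cⱼ(0)² = 1`.
-/

open MvPolynomial

/-- The Horn polynomial as a multivariate polynomial over ℝ. -/
noncomputable def hornPoly : MvPolynomial (Fin 5) ℝ :=
  (X 0 + X 1 + X 2 + X 3 + X 4) ^ 2
    - 4 * (X 0 * X 1 + X 1 * X 2 + X 2 * X 3 + X 3 * X 4 + X 4 * X 0)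

open Fin.NatCast in
theorem Fin.eq_zero_of_forall_add_one_eq_neg {n : ℕ} [NeZero n] (hn : Odd n) {G : Type*}
    [AddCommGroup G] [IsAddTorsionFree G] {f : Fin n → G} (hf : ∀ k, f (k + 1) = -f k) :
    f 0 = 0 := by
  have hpow (m : ℕ) : f m = ((-1 : ℤ) ^ m) • f 0 := by
    induction m with
    | zero => simp
    | succ m ih => rw [Nat.cast_succ, hf, ih, pow_succ, mul_neg_one, neg_smul]
  simpa [hn.neg_one_pow, self_eq_neg] using hpow n

theorem UniqueFactorizationMonoid.exists_prime_dvd_not_sq_dvd {R S F : Type*}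
    [CommMonoidWithZero R] [UniqueFactorizationMonoid R] [CommMonoid S] [FunLike F R S]
    [MonoidHomClass F R S] (φ : F) {x : R} (hx : x ≠ 0) (hsq : Squarefree (φ x))
    (hunit : ¬IsUnit (φ x)) : ∃ p, Prime p ∧ p ∣ x ∧ ¬p ^ 2 ∣ x := by
  by_contra! hcon
  refine hunit (induction_on_prime (P := fun y => y ∣ x → IsUnit (φ y)) x ?_ ?_ ?_ dvd_rfl)
  · exact fun h => absurd (zero_dvd_iff.mp h) hx
  · exact fun u hu _ => hu.map φ
  · intro a p _ hp ih hpa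
    have hp2 : φ p * φ p ∣ φ x := by
      rw [← map_mul, ← sq]
      exact map_dvd φ (hcon p hp (dvd_of_mul_right_dvd hpa))
    rw [map_mul]
    exact (hsq _ hp2).mul (ih (dvd_of_mul_left_dvd hpa))

open Polynomial

theorem Polynomial.irreducible_X_pow_sub_C_of_prime_dvd {R : Type*} [CommRing R] [IsDomain R]
    {n : ℕ} (hn : 0 < n) {p a : R} (hp : Prime p) (hpa : p ∣ a) (hpa2 : ¬p ^ 2 ∣ a) :
    Irreducible (X ^ n - C a) := by
  have hmonic : (X ^ n - C a).Monic := monic_X_pow_sub_C a hn.ne'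
  have hdeg : (X ^ n - C a).natDegree = n := natDegree_X_pow_sub_C
  refine IsEisensteinAt.irreducible ?_ ((Ideal.span_singleton_prime hp.ne_zero).mpr hp)
    hmonic.isPrimitive (by rwa [hdeg])
  refine hmonic.isEisensteinAt_of_mem_of_notMem ?_ ?_ ?_
  · rw [Ne, Ideal.span_singleton_eq_top]
    exact hp.not_isUnit
  · intro k hk
    rw [hdeg] at hk
    rcases Nat.eq_zero_or_pos k with rfl | hk0
    · simpa [hn.ne, Ideal.mem_span_singleton] using hpa
    · simp [coeff_X_pow, coeff_C, hk.ne, hk0.ne']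
  · simpa [hn.ne, Ideal.span_singleton_pow, Ideal.mem_span_singleton] using hpa2

/-- The resultant gives the Bézout relation; it is nonzero because `f` stays irreducible over the
fraction field (Gauss), where it cannot divide the smaller nonzero `g`. -/
theorem Polynomial.exists_mul_add_mul_eq_C_of_irreducible {R : Type*} [CommRing R] [IsDomain R]
    [IsIntegrallyClosed R] {f g : R[X]} (hf : f.Monic) (hirr : Irreducible f) (hg : g ≠ 0)
    (hdeg : g.degree < f.degree) : ∃ p q c, c ≠ 0 ∧ f * p + g * q = C c := by
  have hf0 : f.natDegree ≠ 0 :=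
    (hf.natDegree_pos.mpr fun h1 => hirr.not_isUnit (h1 ▸ isUnit_one)).ne'
  obtain ⟨p, q, -, -, h⟩ := exists_mul_add_mul_eq_C_resultant f g le_rfl le_rfl (.inl hf0)
  refine ⟨p, q, _, fun h0 => ?_, h⟩
  have hinj := IsFractionRing.injective R (FractionRing R)
  have hres : resultant (f.map (algebraMap R (FractionRing R)))
      (g.map (algebraMap R (FractionRing R))) = 0 := by
    simp [natDegree_map_eq_of_injective hinj, h0]
  refine (resultant_eq_zero_iff.mp hres).2 ?_
  rw [(hf.irreducible_iff_irreducible_map_fraction_map.mp hirr).coprime_iff_not_dvd]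
  intro hdvd
  refine (Polynomial.map_ne_zero_iff hinj).mpr hg (eq_zero_of_dvd_of_degree_lt hdvd ?_)
  rwa [degree_map_eq_of_injective hinj, degree_map_eq_of_injective hinj]

namespace HornPower

variable {d : ℕ}

/-- `s^d - (a^d + b^d)` in `ℝ[a, b][s]`, with `a = X 0`, `b = X 1` and `s = Polynomial.X`. -/
noncomputable def fermat (d : ℕ) : (MvPolynomial (Fin 2) ℝ)[X] :=
  Polynomial.X ^ d - Polynomial.C (X 0 ^ d + X 1 ^ d)

theorem fermat_monic (hd : 0 < d) : (fermat d).Monic :=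
  monic_X_pow_sub_C _ hd.ne'

/-- Dehomogenizing at `b = 1` turns `a^d + b^d` into the squarefree `X^d + 1`. -/
theorem exists_prime_dvd_not_sq_dvd_sum_pow (hd : 0 < d) :
    ∃ p : MvPolynomial (Fin 2) ℝ, Prime p ∧ p ∣ X 0 ^ d + X 1 ^ d ∧ ¬p ^ 2 ∣ X 0 ^ d + X 1 ^ d := by
  let φ : MvPolynomial (Fin 2) ℝ →ₐ[ℝ] ℝ[X] := aeval ![Polynomial.X, 1]
  have hφ : φ (X 0 ^ d + X 1 ^ d) = Polynomial.X ^ d - Polynomial.C (-1) := by simp [φ]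
  have hdeg : (Polynomial.X ^ d - Polynomial.C (-1) : ℝ[X]).natDegree = d :=
    natDegree_X_pow_sub_C
  refine UniqueFactorizationMonoid.exists_prime_dvd_not_sq_dvd φ ?_ ?_ ?_
  · intro h0
    rw [h0, map_zero] at hφ
    exact (monic_X_pow_sub_C (-1 : ℝ) hd.ne').ne_zero hφ.symm
  · rw [hφ]
    exact (separable_X_pow_sub_C _ (by exact_mod_cast hd.ne') (by norm_num)).squarefree
  · rw [hφ]
    intro hu
    have := natDegree_eq_zero_of_isUnit hu
    omega

theorem irreducible_fermat (hd : 0 < d) : Irreducible (fermat d) := by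
  obtain ⟨p, hp, hpa, hpa2⟩ := exists_prime_dvd_not_sq_dvd_sum_pow hd
  exact irreducible_X_pow_sub_C_of_prime_dvd hd hp hpa hpa2

theorem eval₂_fermat {s : ℝ} {x : Fin 2 → ℝ} (hs : s ^ d = x 0 ^ d + x 1 ^ d) :
    eval₂RingHom (eval x) s (fermat d) = 0 := by
  simp [fermat, hs, Polynomial.eval₂_pow]

theorem fermat_dvd_of_eval₂_eq_zero (hd : 0 < d) {f : (MvPolynomial (Fin 2) ℝ)[X]}
    (hf : ∀ (s : ℝ) (x : Fin 2 → ℝ), s ^ d = x 0 ^ d + x 1 ^ d → eval₂RingHom (eval x) s f = 0) :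
    fermat d ∣ f := by
  have hmonic := fermat_monic hd
  rw [← modByMonic_eq_zero_iff_dvd hmonic]
  by_contra hr
  obtain ⟨p, q, c, hc, h⟩ := exists_mul_add_mul_eq_C_of_irreducible hmonic (irreducible_fermat hd)
    hr (degree_modByMonic_lt f hmonic)
  -- every point of the open quadrant lifts to a real point `(s, x)` of the Fermat hypersurface
  refine hc (funext_set (fun _ => Set.Ioi 0) (fun _ => Set.Ioi_infinite 0) fun x hx => ?_)
  set s : ℝ := (x 0 ^ d + x 1 ^ d) ^ (d : ℝ)⁻¹
  have hs : s ^ d = x 0 ^ d + x 1 ^ d := by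
    have : 0 < x 0 := hx 0 trivial
    have : 0 < x 1 := hx 1 trivial
    exact Real.rpow_inv_natCast_pow (by positivity) hd.ne'
  have hrs : eval₂RingHom (eval x) s (f %ₘ fermat d) = 0 := by
    rw [modByMonic_eq_sub_mul_div, map_sub, map_mul, hf s x hs, eval₂_fermat hs]
    ring
  have hcx := congrArg (eval₂RingHom (eval x) s) h
  rw [map_add, map_mul, map_mul, eval₂_fermat hs, hrs, zero_mul, zero_mul, add_zero,
    coe_eval₂RingHom, Polynomial.eval₂_C] at hcx
  rw [map_zero, ← hcx]

theorem fermat_dvd_of_sum_sq_eq (hd : 0 < d) {ι : Type*} [Fintype ι]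
    {f : ι → (MvPolynomial (Fin 2) ℝ)[X]} (h : ∑ i, f i ^ 2 = fermat d ^ 2) (i : ι) :
    fermat d ∣ f i := by
  refine fermat_dvd_of_eval₂_eq_zero hd fun s x hs => ?_
  have hx := congrArg (eval₂RingHom (eval x) s) h
  simp only [map_sum, map_pow, eval₂_fermat hs, zero_pow two_ne_zero] at hx
  exact pow_eq_zero_iff two_ne_zero |>.mp
    ((Finset.sum_eq_zero_iff_of_nonneg fun _ _ => sq_nonneg _).mp hx i (Finset.mem_univ i))

noncomputable def slice (k : Fin 5) : Fin 5 → (MvPolynomial (Fin 2) ℝ)[X] :=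
  Pi.single k Polynomial.X + Pi.single (k + 1) (Polynomial.C (X 0))
    + Pi.single (k - 1) (Polynomial.C (X 1))

theorem aeval_slice_hornPower (hd : 0 < d) (k : Fin 5) :
    aeval (slice k) (aeval (fun i => (X i : MvPolynomial (Fin 5) ℝ) ^ d) hornPoly)
      = fermat d ^ 2 := by
  rw [comp_aeval_apply]
  fin_cases k <;>
  · simp +decide only [hornPoly, fermat, slice, Pi.add_apply, Pi.single_apply, map_add, map_sub,
      map_mul, map_pow, aeval_ofNat, MvPolynomial.aeval_X, ↓reduceIte, add_zero, zero_add,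
      mul_zero, zero_mul, zero_pow hd.ne']
    ring

noncomputable def sAxis : (MvPolynomial (Fin 2) ℝ)[X] →ₐ[ℝ] ℝ[X] :=
  aevalTower (aeval 0) Polynomial.X

noncomputable def aAxis : (MvPolynomial (Fin 2) ℝ)[X] →ₐ[ℝ] ℝ[X] :=
  aevalTower (aeval (Pi.single 0 Polynomial.X)) 0

theorem sAxis_fermat (hd : 0 < d) : sAxis (fermat d) = Polynomial.X ^ d := by
  simp [sAxis, fermat, zero_pow hd.ne']

theorem aAxis_fermat (hd : 0 < d) : aAxis (fermat d) = -Polynomial.X ^ d := by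
  simp [aAxis, fermat, zero_pow hd.ne']

theorem coeff_zero_aAxis (w : (MvPolynomial (Fin 2) ℝ)[X]) :
    (aAxis w).coeff 0 = (sAxis w).coeff 0 := by
  have h : (Polynomial.aeval (0 : ℝ)).comp aAxis = (Polynomial.aeval 0).comp sAxis := by
    refine Polynomial.algHom_ext' (MvPolynomial.algHom_ext fun i => ?_) (by simp [aAxis, sAxis])
    fin_cases i <;> simp [aAxis, sAxis]
  rw [coeff_zero_eq_eval_zero, coeff_zero_eq_eval_zero, ← Polynomial.coe_aeval_eq_eval,
    ← AlgHom.comp_apply, h, AlgHom.comp_apply]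

theorem aAxis_aeval_slice (k : Fin 5) (p : MvPolynomial (Fin 5) ℝ) :
    aAxis (aeval (slice k) p) = sAxis (aeval (slice (k + 1)) p) := by
  rw [← AlgHom.comp_apply, ← AlgHom.comp_apply]
  congr 1
  ext i : 1
  simp only [AlgHom.comp_apply, MvPolynomial.aeval_X, slice, Pi.add_apply, map_add,
    Pi.apply_single (fun _ => ⇑aAxis) (fun _ => map_zero aAxis),
    Pi.apply_single (fun _ => ⇑sAxis) (fun _ => map_zero sAxis)]
  simp [aAxis, sAxis]

theorem coeff_zero_sAxis_add_one (hd : 0 < d) {p : MvPolynomial (Fin 5) ℝ}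
    {w : Fin 5 → (MvPolynomial (Fin 2) ℝ)[X]} (hw : ∀ k, aeval (slice k) p = fermat d * w k)
    (k : Fin 5) : (sAxis (w (k + 1))).coeff 0 = -(sAxis (w k)).coeff 0 := by
  have h : Polynomial.X ^ d * sAxis (w (k + 1)) = Polynomial.X ^ d * -aAxis (w k) :=
    calc Polynomial.X ^ d * sAxis (w (k + 1)) = sAxis (aeval (slice (k + 1)) p) := by
          rw [hw, map_mul, sAxis_fermat hd]
      _ = aAxis (aeval (slice k) p) := (aAxis_aeval_slice k p).symm
      _ = Polynomial.X ^ d * -aAxis (w k) := by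
          rw [hw, map_mul, aAxis_fermat hd, neg_mul, mul_neg]
  rw [mul_left_cancel₀ (pow_ne_zero _ X_ne_zero) h, Polynomial.coeff_neg, coeff_zero_aAxis]

theorem sum_sq_coeff_zero_sAxis_eq_one (hd : 0 < d) {ι : Type*} [Fintype ι]
    {w : ι → (MvPolynomial (Fin 2) ℝ)[X]} (h : ∑ i, (fermat d * w i) ^ 2 = fermat d ^ 2) :
    ∑ i, (sAxis (w i)).coeff 0 ^ 2 = 1 := by
  have hs := congrArg sAxis h
  simp only [map_sum, map_pow, map_mul, sAxis_fermat hd, mul_pow, ← Finset.mul_sum] at hs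
  have hone : ∑ i, sAxis (w i) ^ 2 = 1 :=
    mul_left_cancel₀ (pow_ne_zero 2 (pow_ne_zero _ X_ne_zero)) (hs.trans (mul_one _).symm)
  simpa [eval_finsetSum, ← coeff_zero_eq_eval_zero] using congrArg (Polynomial.eval 0) hone

end HornPower

open HornPower

/-- For every positive integer `d`, the polynomial `h(x₁^d, …, x₅^d)` is not a sum of
squares of real polynomials. -/
theorem horn_power_not_sos (d : ℕ) (hd : 0 < d) :
    ¬ ∃ (m : ℕ) (g : Fin m → MvPolynomial (Fin 5) ℝ),
        MvPolynomial.aeval (fun i => (X i : MvPolynomial (Fin 5) ℝ) ^ d) hornPoly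
          = ∑ i, g i ^ 2 := by
  rintro ⟨m, g, hsum⟩
  have hslice (k : Fin 5) : ∑ j, aeval (slice k) (g j) ^ 2 = fermat d ^ 2 := by
    simp only [← aeval_slice_hornPower hd k, hsum, map_sum, map_pow]
  choose w hw using fun k j => fermat_dvd_of_sum_sq_eq hd (hslice k) j
  have hzero (j : Fin m) : (sAxis (w 0 j)).coeff 0 = 0 :=
    Fin.eq_zero_of_forall_add_one_eq_neg (f := fun k => (sAxis (w k j)).coeff 0) (by decide)
      (coeff_zero_sAxis_add_one hd fun k => hw k j)
  have hone := sum_sq_coeff_zero_sAxis_eq_one hd (w := w 0) (by simpa only [hw] using hslice 0)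
  simp [hzero] at hone
end

section
/- If a sum of squares of real polynomials g1^2 + ... + gm^2 equals the square q^2 of an irreducible real polynomial q whose real zero set is Zariski dense in its complex zero set, then every gi is divisible by q. -/
/-!
At a real zero of `q` the identity `∑ gᵢ² = q²` forces every `gᵢ` to vanish, since a sum of real
squares is zero only if each square is. By the density hypothesis each `gᵢ` then vanishes on the
complex zero set of `q`. As `q` is irreducible, `(q)` is a prime ideal, so by the Nullstellensatz
it is the full ideal of polynomials vanishing on that zero set; hence `q ∣ gᵢ`.
-/

open MvPolynomial

namespace MvPolynomial

theorem eval_eq_zero_of_sum_sq_eq_sq {σ R ι : Type*} [CommRing R] [LinearOrder R]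
    [IsStrictOrderedRing R] {s : Finset ι} {g : ι → MvPolynomial σ R} {q : MvPolynomial σ R}
    (hsos : ∑ i ∈ s, g i ^ 2 = q ^ 2) {x : σ → R} (hx : eval x q = 0) {i : ι} (hi : i ∈ s) :
    eval x (g i) = 0 := by
  have hsum : ∑ j ∈ s, eval x (g j) ^ 2 = 0 := by
    simpa [hx] using congrArg (eval x) hsos
  exact pow_eq_zero_iff two_ne_zero |>.mp <|
    (Finset.sum_eq_zero_iff_of_nonneg fun j _ => sq_nonneg _).mp hsum i hi

theorem eval_map_algebraMap {σ R S : Type*} [CommSemiring R] [CommSemiring S] [Algebra R S]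
    (z : σ → S) (p : MvPolynomial σ R) : eval z (map (algebraMap R S) p) = aeval z p := by
  rw [aeval_def, eval₂_eq_eval_map]

theorem dvd_of_aeval_eq_zero_of_irreducible {σ k : Type*} (K : Type*) [Finite σ] [Field k]
    [Field K] [IsAlgClosed K] [Algebra k K] {p q : MvPolynomial σ k} (hq : Irreducible q)
    (h : ∀ z : σ → K, aeval z q = 0 → aeval z p = 0) : q ∣ p := by
  have : (Ideal.span {q}).IsPrime := (Ideal.span_singleton_prime hq.ne_zero).mpr hq.prime
  rw [← Ideal.mem_span_singleton, ← IsPrime.vanishingIdeal_zeroLocus (K := K) (Ideal.span {q})]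
  intro z hz
  exact h z (hz q (Ideal.mem_span_singleton_self q))

end MvPolynomial

/-- If a sum of squares of real polynomials equals `q ^ 2` for an irreducible real
polynomial `q` whose real zero set is Zariski dense in its complex zero set (i.e. every
complex polynomial vanishing on the real zeros of `q` vanishes on all complex zeros of
`q`), then every summand is divisible by `q`. -/
theorem sos_eq_sq_irreducible_dvd
    (n : ℕ) (q : MvPolynomial (Fin n) ℝ) (hq : Irreducible q)
    (hdense : ∀ f : MvPolynomial (Fin n) ℂ,
      (∀ x : Fin n → ℝ, eval x q = 0 → eval (fun i => (x i : ℂ)) f = 0) →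
      ∀ z : Fin n → ℂ, eval z (MvPolynomial.map (algebraMap ℝ ℂ) q) = 0 → eval z f = 0)
    (m : ℕ) (g : Fin m → MvPolynomial (Fin n) ℝ)
    (hsos : ∑ i, g i ^ 2 = q ^ 2) :
    ∀ i, q ∣ g i := by
  intro i
  have hreal : ∀ x : Fin n → ℝ, eval x q = 0 → eval x (g i) = 0 := fun _ hx =>
    eval_eq_zero_of_sum_sq_eq_sq hsos hx (Finset.mem_univ i)
  refine dvd_of_aeval_eq_zero_of_irreducible ℂ hq fun z hz => ?_
  rw [← eval_map_algebraMap] at hz ⊢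
  refine hdense _ (fun x hx => ?_) z hz
  rw [eval_map_algebraMap]
  change aeval (algebraMap ℝ ℂ ∘ x) (g i) = 0
  rw [aeval_algebraMap_eq_zero_iff_of_injective (h := (algebraMap ℝ ℂ).injective)]
  exact hreal x hx
end

section
/- Let H = R[[ε^Λ]] be the Hahn series field over a real closed field R and let f: Λ → R. Define L_f: H → H by L_f(∑ c_e ε^e) = ∑ f(e) c_e ε^e. If L_f is unital and 2-positive (preserves positive semidefiniteness of 2×2 symmetric matrices entrywise), then f(a)·f(−a) ≥ 1 for every a ∈ Λ; in particular f is nowhere zero and L_f is bijective. -/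
open HahnSeries Matrix

/-- The nonnegative elements of the real closed Hahn series field `ℝ[[ε^Γ]]`. -/
def HahnSeries.Nonneg {Γ : Type*} [AddCommGroup Γ] [LinearOrder Γ] [IsOrderedAddMonoid Γ]
    (x : HahnSeries Γ ℝ) : Prop :=
  x = 0 ∨ 0 < x.leadingCoeff

/-- For `f : Γ → ℝ`, the map `L_f : ℝ[[ε^Γ]] → ℝ[[ε^Γ]]`,
`∑ cₑ εᵉ ↦ ∑ f(e) cₑ εᵉ`. -/
def Lf {Γ : Type*} [AddCommGroup Γ] [LinearOrder Γ] [IsOrderedAddMonoid Γ] (f : Γ → ℝ)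
    (x : HahnSeries Γ ℝ) : HahnSeries Γ ℝ where
  coeff e := f e * x.coeff e
  isPWO_support' := x.isPWO_support.mono (by
    intro e he
    simp only [Function.mem_support] at he ⊢
    exact fun h => he (by rw [h, mul_zero]))


/-!
The matrix `A = !![ε⁻ᵃ, 1; 1, εᵃ]` is positive semidefinite, its quadratic form being
`ε⁻ᵃ (x + εᵃ y)²`. Since `L_f` is unital it maps `A` to `!![f(-a) ε⁻ᵃ, 1; 1, f(a) εᵃ]`, and testing
this on `(1, r ε⁻ᵃ)` for real `r` gives `(f(a) r² + 2 r + f(-a)) ε⁻ᵃ ≥ 0`. So the real quadratic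
`f(a) r² + 2 r + f(-a)` is nonnegative and its discriminant `4 - 4 f(a) f(-a)` is `≤ 0`.
Hence `f` never vanishes and `L_{1/f}` inverts `L_f`.
-/

namespace HahnSeries

variable {Γ : Type*} [AddCommGroup Γ] [LinearOrder Γ]

noncomputable def epsMatrix (a : Γ) : Matrix (Fin 2) (Fin 2) (HahnSeries Γ ℝ) :=
  !![single (-a) 1, 1; 1, single a 1]

theorem epsMatrix_isSymm (a : Γ) : (epsMatrix a).IsSymm :=
  IsSymm.ext fun i j => by fin_cases i <;> fin_cases j <;> rfl

variable [IsOrderedAddMonoid Γ]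

theorem nonneg_single_iff {b : Γ} {r : ℝ} : (single b r : HahnSeries Γ ℝ).Nonneg ↔ 0 ≤ r := by
  rw [Nonneg, single_eq_zero_iff, leadingCoeff_of_single, le_iff_lt_or_eq, eq_comm, or_comm]

theorem Nonneg.mul {x y : HahnSeries Γ ℝ} (hx : x.Nonneg) (hy : y.Nonneg) : (x * y).Nonneg := by
  rcases hx with rfl | hx
  · exact .inl (zero_mul y)
  rcases hy with rfl | hy
  · exact .inl (mul_zero x)
  exact .inr (leadingCoeff_mul x y ▸ mul_pos hx hy)

theorem nonneg_mul_self (x : HahnSeries Γ ℝ) : (x * x).Nonneg := by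
  rcases eq_or_ne x 0 with rfl | hx
  · exact .inl (mul_zero 0)
  · exact .inr (leadingCoeff_mul x x ▸ mul_self_pos.2 (leadingCoeff_ne_zero.2 hx))

theorem dotProduct_epsMatrix_mulVec (a : Γ) (v : Fin 2 → HahnSeries Γ ℝ) :
    v ⬝ᵥ (epsMatrix a *ᵥ v) =
      single (-a) 1 * ((v 0 + single a 1 * v 1) * (v 0 + single a 1 * v 1)) := by
  have hinv : (single (-a) 1 : HahnSeries Γ ℝ) * single a 1 = 1 := by
    rw [single_mul_single, neg_add_cancel, mul_one, single_zero_one]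
  simp only [epsMatrix, dotProduct, mulVec, Fin.sum_univ_two, of_apply, cons_val_zero,
    cons_val_one]
  linear_combination (-(2 * v 0 * v 1 + single a 1 * v 1 * v 1)) * hinv

theorem epsMatrix_nonneg (a : Γ) (v : Fin 2 → HahnSeries Γ ℝ) :
    (v ⬝ᵥ (epsMatrix a *ᵥ v)).Nonneg := by
  rw [dotProduct_epsMatrix_mulVec]
  exact (nonneg_single_iff.2 zero_le_one).mul (nonneg_mul_self _)

end HahnSeries

section Lf

variable {Γ : Type*} [AddCommGroup Γ] [LinearOrder Γ] [IsOrderedAddMonoid Γ]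

@[simp]
theorem Lf_coeff (f : Γ → ℝ) (x : HahnSeries Γ ℝ) (e : Γ) : (Lf f x).coeff e = f e * x.coeff e :=
  rfl

theorem Lf_single (f : Γ → ℝ) (b : Γ) (r : ℝ) : Lf f (single b r) = single b (f b * r) := by
  ext e
  by_cases h : e = b
  · subst h; simp
  · simp [coeff_single_of_ne h]

theorem Lf_Lf (f g : Γ → ℝ) (x : HahnSeries Γ ℝ) : Lf f (Lf g x) = Lf (f * g) x := by
  ext e
  simp [mul_assoc]

theorem Lf_one (x : HahnSeries Γ ℝ) : Lf 1 x = x := by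
  ext e
  simp

theorem Lf_bijective {f : Γ → ℝ} (hf : ∀ e, f e ≠ 0) : Function.Bijective (Lf f) := by
  have hleft : f⁻¹ * f = 1 := funext fun e => inv_mul_cancel₀ (hf e)
  have hright : f * f⁻¹ = 1 := funext fun e => mul_inv_cancel₀ (hf e)
  refine Function.bijective_iff_has_inverse.2 ⟨Lf f⁻¹, fun x => ?_, fun x => ?_⟩
  · rw [Lf_Lf, hleft, Lf_one]
  · rw [Lf_Lf, hright, Lf_one]

theorem epsMatrix_map_Lf {f : Γ → ℝ} (hunital : Lf f 1 = 1) (a : Γ) :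
    (epsMatrix a).map (Lf f) = !![single (-a) (f (-a)), 1; 1, single a (f a)] := by
  ext i j
  fin_cases i <;> fin_cases j <;> simp [epsMatrix, Lf_single, hunital]

theorem dotProduct_epsMatrix_map_Lf_mulVec {f : Γ → ℝ} (hunital : Lf f 1 = 1) (a : Γ) (r : ℝ) :
    ![1, single (-a) r] ⬝ᵥ ((epsMatrix a).map (Lf f) *ᵥ ![1, single (-a) r]) =
      single (-a) (f a * (r * r) + 2 * r + f (-a)) := by
  have hexp : -a + (a + -a) = -a := by abel
  simp only [epsMatrix_map_Lf hunital, dotProduct, mulVec, Fin.sum_univ_two, of_apply,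
    cons_val_zero, cons_val_one, one_mul, mul_one, mul_add, single_mul_single, hexp,
    ← HahnSeries.single_add]
  congr 1
  ring

end Lf

theorem one_le_mul_of_forall_quadratic_nonneg {p q : ℝ}
    (h : ∀ r : ℝ, 0 ≤ q * (r * r) + 2 * r + p) :
    1 ≤ q * p := by
  have := discrim_le_zero h
  rw [discrim] at this
  linarith

theorem Lf_unital_twoPositive_general {Γ : Type*} [AddCommGroup Γ] [LinearOrder Γ] [IsOrderedAddMonoid Γ]
    (f : Γ → ℝ) (hunital : Lf f 1 = 1)
    (h2pos : ∀ A : Matrix (Fin 2) (Fin 2) (HahnSeries Γ ℝ), A.IsSymm →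
      (∀ v : Fin 2 → HahnSeries Γ ℝ, (v ⬝ᵥ A.mulVec v).Nonneg) →
      ∀ v : Fin 2 → HahnSeries Γ ℝ, (v ⬝ᵥ (A.map (Lf f)).mulVec v).Nonneg) :
    (∀ a : Γ, 1 ≤ f a * f (-a)) ∧ (∀ a : Γ, f a ≠ 0) ∧ Function.Bijective (Lf f) := by
  have hmul : ∀ a : Γ, 1 ≤ f a * f (-a) := fun a =>
    one_le_mul_of_forall_quadratic_nonneg fun r => by
      have h := h2pos _ (epsMatrix_isSymm a) (epsMatrix_nonneg a) ![1, single (-a) r]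
      rwa [dotProduct_epsMatrix_map_Lf_mulVec hunital, nonneg_single_iff] at h
  have hne : ∀ a : Γ, f a ≠ 0 := fun a ha => by
    have := hmul a
    norm_num [ha] at this
  exact ⟨hmul, hne, Lf_bijective hne⟩

/-- If `L_f` is unital and 2-positive (it preserves positive semidefiniteness of `2 × 2`
symmetric matrices over the Hahn series field), then `f(a) f(−a) ≥ 1` for all `a ∈ Γ`;
in particular `f` is nowhere zero and `L_f` is bijective. -/
theorem Lf_unital_twoPositive {Γ : Type*} [AddCommGroup Γ] [LinearOrder Γ] [IsOrderedAddMonoid Γ]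
    (hdiv : ∀ (g : Γ) (k : ℕ), 0 < k → ∃ h : Γ, k • h = g)
    (f : Γ → ℝ) (hunital : Lf f 1 = 1)
    (h2pos : ∀ A : Matrix (Fin 2) (Fin 2) (HahnSeries Γ ℝ), A.IsSymm →
      (∀ v : Fin 2 → HahnSeries Γ ℝ, (v ⬝ᵥ A.mulVec v).Nonneg) →
      ∀ v : Fin 2 → HahnSeries Γ ℝ, (v ⬝ᵥ (A.map (Lf f)).mulVec v).Nonneg) :
    (∀ a : Γ, 1 ≤ f a * f (-a)) ∧ (∀ a : Γ, f a ≠ 0) ∧ Function.Bijective (Lf f) :=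
  Lf_unital_twoPositive_general f hunital h2pos
end

section
/- Let μ be the Lebesgue measure restricted to a compact interval [a,b] with a < b, and define T on the group ring ℝ[ℝ] (spanned by formal symbols ε^a, a ∈ ℝ) by T(∑ c_i ε^{a_i}) = ∫_a^b ∑ c_i exp(a_i x) dx. Then T(g^2) > 0 for every nonzero g ∈ ℝ[ℝ]. Consequently the function f(a) = T(ε^a) = ∫_a^b exp(a x) dx is positive definite on ℝ. -/
/-!
`Ψ g` is a finite exponential sum, hence real-analytic, and `Ψ` is injective by Dedekind's
independence of the characters `t ↦ exp (e t)`.  So for `g ≠ 0` the function `Ψ g` cannot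
vanish on the open interval `(a, b)` (identity theorem), and `T (g²) = ∫_a^b (Ψ g)² > 0`.
For the second claim put `g = ∑ cᵢ ε^{xᵢ}`, which is nonzero because the `xᵢ` are distinct;
then `∑ cᵢ cⱼ f (xᵢ + xⱼ) = T (g²)`.
-/

open Set Real

noncomputable section

def expChar (e : ℝ) : Multiplicative ℝ →* ℝ where
  toFun t := exp (e * t.toAdd)
  map_one' := by simp
  map_mul' s t := by simp [mul_add, exp_add]

theorem linearIndependent_exp_mul :
    LinearIndependent ℝ fun (e : ℝ) (t : ℝ) => exp (e * t) := by
  have hinj : Function.Injective expChar := fun e e' h => by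
    simpa [expChar] using congr($h (Multiplicative.ofAdd 1))
  exact (linearIndependent_monoidHom (Multiplicative ℝ) ℝ).comp expChar hinj

def expCharacter : Multiplicative ℝ →* (ℝ → ℝ) where
  toFun e t := exp (e.toAdd * t)
  map_one' := by ext; simp
  map_mul' e f := by ext; simp [add_mul, exp_add]

/-- The map `Ψ : ℝ[ℝ] → C^ω(ℝ)`, `ε^e ↦ (t ↦ exp (e t))`. -/
def expSum : AddMonoidAlgebra ℝ ℝ →ₐ[ℝ] (ℝ → ℝ) :=
  AddMonoidAlgebra.lift ℝ (ℝ → ℝ) ℝ expCharacter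

theorem expSum_apply (g : AddMonoidAlgebra ℝ ℝ) (t : ℝ) :
    expSum g t = g.coeff.sum fun e r => r * exp (e * t) := by
  simp [expSum, AddMonoidAlgebra.lift_apply, Finsupp.sum, expCharacter]

theorem expSum_single (e r : ℝ) :
    expSum (AddMonoidAlgebra.single e r) = fun t => r * exp (e * t) := by
  ext t; simp [expSum, expCharacter]

theorem expSum_injective : Function.Injective expSum := by
  rw [injective_iff_map_eq_zero]
  intro g hg
  rw [← AddMonoidAlgebra.coeff_eq_zero]
  refine linearIndependent_iff.mp linearIndependent_exp_mul g.coeff ?_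
  ext t
  simpa [expSum_apply, Finsupp.linearCombination_apply, Finsupp.sum] using congr_fun hg t

theorem analyticOnNhd_expSum (g : AddMonoidAlgebra ℝ ℝ) : AnalyticOnNhd ℝ (expSum g) univ := by
  have hsum : expSum g = fun t => ∑ e ∈ g.coeff.support, g.coeff e * exp (e * t) := by
    ext t; exact expSum_apply g t
  rw [hsum]
  intro t _
  fun_prop

theorem continuous_expSum (g : AddMonoidAlgebra ℝ ℝ) : Continuous (expSum g) :=
  continuousOn_univ.mp (analyticOnNhd_expSum g).continuousOn

theorem exists_expSum_ne_zero {g : AddMonoidAlgebra ℝ ℝ} (hg : g ≠ 0) {s : Set ℝ}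
    (hs : (interior s).Nonempty) : ∃ t ∈ s, expSum g t ≠ 0 := by
  by_contra! hzero
  obtain ⟨t₀, ht₀⟩ := hs
  have hlocal : expSum g =ᶠ[nhds t₀] 0 :=
    Filter.eventually_of_mem (mem_interior_iff_mem_nhds.mp ht₀) hzero
  have hglobal : expSum g = 0 := funext fun t =>
    (analyticOnNhd_expSum g).eqOn_zero_of_preconnected_of_eventuallyEq_zero
      isPreconnected_univ (mem_univ t₀) hlocal (mem_univ t)
  exact hg (expSum_injective (hglobal.trans (map_zero expSum).symm))

/-- The functional `T`. -/
def integralFunctional (a b : ℝ) : AddMonoidAlgebra ℝ ℝ →ₗ[ℝ] ℝ where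
  toFun g := ∫ t in a..b, expSum g t
  map_add' g h := by
    simp only [map_add, Pi.add_apply]
    exact intervalIntegral.integral_add ((continuous_expSum g).intervalIntegrable a b)
      ((continuous_expSum h).intervalIntegrable a b)
  map_smul' r g := by
    simp only [map_smul, Pi.smul_apply, smul_eq_mul, RingHom.id_apply]
    exact intervalIntegral.integral_const_mul r _

theorem integralFunctional_apply (a b : ℝ) (g : AddMonoidAlgebra ℝ ℝ) :
    integralFunctional a b g = ∫ t in a..b, expSum g t := rfl

theorem integralFunctional_single (a b e r : ℝ) :
    integralFunctional a b (AddMonoidAlgebra.single e r) = r * ∫ t in a..b, exp (e * t) := by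
  rw [integralFunctional_apply, expSum_single, intervalIntegral.integral_const_mul]

theorem integralFunctional_mul_self_pos {a b : ℝ} (hab : a < b) {g : AddMonoidAlgebra ℝ ℝ}
    (hg : g ≠ 0) : 0 < integralFunctional a b (g * g) := by
  have hint : (interior (Icc a b)).Nonempty := by
    rw [interior_Icc]; exact nonempty_Ioo.mpr hab
  obtain ⟨t, ht, hne⟩ := exists_expSum_ne_zero hg hint
  have hcont : Continuous fun t => expSum g t * expSum g t :=
    (continuous_expSum g).mul (continuous_expSum g)
  have hlt := intervalIntegral.integral_lt_integral_of_continuousOn_of_le_of_exists_lt hab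
    continuousOn_const hcont.continuousOn (fun t _ => mul_self_nonneg (expSum g t))
    ⟨t, ht, mul_self_pos.mpr hne⟩
  simpa [integralFunctional_apply, map_mul] using hlt

theorem AddMonoidAlgebra.sum_single_ne_zero {k G ι : Type*} [Semiring k] [Fintype ι]
    {x : ι → G} (hx : Function.Injective x) {c : ι → k} (hc : c ≠ 0) :
    ∑ i, AddMonoidAlgebra.single (x i) (c i) ≠ 0 := by
  classical
  obtain ⟨i, hi⟩ := Function.ne_iff.mp hc
  intro hzero
  have hcoeff : (∑ j, AddMonoidAlgebra.single (x j) (c j)).coeff (x i) = c i := by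
    simp [AddMonoidAlgebra.coeff_sum, AddMonoidAlgebra.coeff_single, Finsupp.single_apply,
      hx.eq_iff]
  simp [hzero] at hcoeff
  exact hi hcoeff.symm

end

/-- Let `T` be the functional on the group ring `ℝ[ℝ]` defined by integrating the
associated exponential sum over a compact interval `[a, b]` with `a < b`.  Then
`T(g²) > 0` for every nonzero `g`, and consequently the function
`t ↦ ∫ x in a..b, exp(t x)` is positive definite on `ℝ`. -/
theorem integral_functional_positive_on_squares (a b : ℝ) (hab : a < b) :
    (∀ g : AddMonoidAlgebra ℝ ℝ, g ≠ 0 →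
      0 < ∫ x in a..b, Finsupp.sum (g * g).coeff fun e r => r * Real.exp (e * x)) ∧
    (∀ (k : ℕ) (x : Fin k → ℝ), Function.Injective x →
      ∀ c : Fin k → ℝ, c ≠ 0 →
        0 < ∑ i, ∑ j, c i * c j * ∫ t in a..b, Real.exp ((x i + x j) * t)) := by
  refine ⟨fun g hg => ?_, fun k x hx c hc => ?_⟩
  · simpa only [integralFunctional_apply, expSum_apply] using
      integralFunctional_mul_self_pos hab hg
  · set g := ∑ i, AddMonoidAlgebra.single (x i) (c i)
    have hsquare : integralFunctional a b (g * g) =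
        ∑ i, ∑ j, c i * c j * ∫ t in a..b, exp ((x i + x j) * t) := by
      simp only [g, Finset.sum_mul_sum, AddMonoidAlgebra.single_mul_single, map_sum,
        integralFunctional_single]
    exact hsquare ▸ integralFunctional_mul_self_pos hab (AddMonoidAlgebra.sum_single_ne_zero hx hc)
end

section
/- Let G be a finite simple graph with stability number α(G), adjacency matrix A, identity I, and all-ones matrix J. Then the matrix Q(G) = α(G)(I + A) − J is copositive, i.e., x^T Q(G) x ≥ 0 for every vector x with nonnegative real entries. -/
/-!
Moving all the mass of a vertex `j` onto an adjacent vertex `i` changes `x ⬝ᵥ (I + A) *ᵥ x` by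
`2 x_j ((I + A) x)_i - 2 x_j ((I + A) x)_j`, since the quadratic term cancels along an edge. Moving
towards the endpoint with the smaller value of `(I + A) x` therefore never increases the form, and
repeating this empties one vertex of every edge of the support, preserving `∑ x`. On an independent
support `t` the form is `∑ x_k ^ 2 ≥ (∑ x_k) ^ 2 / #t` by Cauchy–Schwarz, and `#t ≤ α(G)`.
-/

open Matrix Finset

section IsSymm

variable {V R : Type*} [Fintype V] [CommRing R]

theorem Matrix.IsSymm.dotProduct_mulVec_comm {M : Matrix V V R} (hM : M.IsSymm) (x y : V → R) :
    x ⬝ᵥ M *ᵥ y = y ⬝ᵥ M *ᵥ x := by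
  rw [dotProduct_mulVec, dotProduct_comm, ← mulVec_transpose, hM.eq]

theorem Matrix.IsSymm.dotProduct_mulVec_add_smul {M : Matrix V V R} (hM : M.IsSymm)
    (x v : V → R) (t : R) :
    (x + t • v) ⬝ᵥ M *ᵥ (x + t • v) =
      x ⬝ᵥ M *ᵥ x + 2 * t * (v ⬝ᵥ M *ᵥ x) + t ^ 2 * (v ⬝ᵥ M *ᵥ v) := by
  simp only [mulVec_add, mulVec_smul, add_dotProduct, dotProduct_add, smul_dotProduct,
    dotProduct_smul, smul_eq_mul, hM.dotProduct_mulVec_comm x v]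
  ring

end IsSymm

section moveMass

variable {V R : Type*} [DecidableEq V] [CommRing R]

def moveMass (x : V → R) (j i : V) : V → R :=
  x + x j • (Pi.single i 1 - Pi.single j 1)

variable {x : V → R} {i j k : V}

theorem moveMass_apply_of_ne (hki : k ≠ i) (hkj : k ≠ j) : moveMass x j i k = x k := by
  simp [moveMass, hki, hkj]

theorem moveMass_apply_source (hij : i ≠ j) : moveMass x j i j = 0 := by
  simp [moveMass, hij.symm]

theorem moveMass_apply_target (hij : i ≠ j) : moveMass x j i i = x i + x j := by
  simp [moveMass, hij]

theorem moveMass_nonneg [PartialOrder R] [IsOrderedRing R] (hx : 0 ≤ x) (hij : i ≠ j) :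
    0 ≤ moveMass x j i := by
  intro k
  by_cases hki : k = i
  · subst hki; rw [moveMass_apply_target hij]; exact add_nonneg (hx k) (hx j)
  by_cases hkj : k = j
  · subst hkj; simp [moveMass_apply_source hij]
  rw [moveMass_apply_of_ne hki hkj]; exact hx k

variable [Fintype V]

theorem sum_moveMass (x : V → R) (j i : V) : ∑ k, moveMass x j i k = ∑ k, x k := by
  simp [moveMass, sum_add_distrib, ← mul_sum, sum_sub_distrib]

theorem Matrix.IsSymm.dotProduct_mulVec_moveMass {M : Matrix V V R} (hM : M.IsSymm)
    (x : V → R) (j i : V) :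
    moveMass x j i ⬝ᵥ M *ᵥ moveMass x j i = x ⬝ᵥ M *ᵥ x
      + 2 * x j * ((M *ᵥ x) i - (M *ᵥ x) j) + x j ^ 2 * (M i i + M j j - 2 * M i j) := by
  rw [moveMass, hM.dotProduct_mulVec_add_smul]
  simp only [sub_dotProduct, single_dotProduct, mulVec_sub, mulVec_single_one, one_mul,
    dotProduct_sub, col_apply, hM.apply j i]
  ring

end moveMass

namespace SimpleGraph

variable {V R : Type*} [Fintype V] [DecidableEq V] {G : SimpleGraph V} [DecidableRel G.Adj]
  [CommRing R]

theorem dotProduct_one_add_adjMatrix_mulVec_eq_sum_sq {t : Finset V} (ht : G.IsIndepSet t)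
    {y : V → R} (hy : ∀ k ∉ t, y k = 0) :
    y ⬝ᵥ (1 + G.adjMatrix R) *ᵥ y = ∑ k ∈ t, y k ^ 2 := by
  have hA : y ⬝ᵥ G.adjMatrix R *ᵥ y = 0 := by
    rw [dot_mulVec_eq_sum_sum]
    refine sum_eq_zero fun l _ => sum_eq_zero fun k _ => ?_
    by_cases hk : k ∈ t
    · by_cases hl : l ∈ t
      · by_cases hkl : k = l
        · simp [hkl]
        · simp [ht hk hl hkl]
      · simp [hy l hl]
    · simp [hy k hk]
  rw [add_mulVec, one_mulVec, dotProduct_add, hA, add_zero, dotProduct,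
    ← sum_subset (subset_univ t) fun k _ hk => by simp [hy k hk]]
  simp only [sq]

variable [LinearOrder R] [IsStrictOrderedRing R]

theorem dotProduct_one_add_adjMatrix_mulVec_nonneg {x : V → R} (hx : 0 ≤ x) :
    0 ≤ x ⬝ᵥ (1 + G.adjMatrix R) *ᵥ x := by
  refine dotProduct_nonneg_of_nonneg hx fun k => ?_
  rw [add_mulVec, one_mulVec, Pi.add_apply, adjMatrix_mulVec_apply]
  exact add_nonneg (hx k) (sum_nonneg fun l _ => hx l)

theorem Adj.dotProduct_mulVec_moveMass_le {i j : V} (h : G.Adj i j) {x : V → R} (hx : 0 ≤ x)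
    (hle : ((1 + G.adjMatrix R) *ᵥ x) i ≤ ((1 + G.adjMatrix R) *ᵥ x) j) :
    moveMass x j i ⬝ᵥ (1 + G.adjMatrix R) *ᵥ moveMass x j i ≤
      x ⬝ᵥ (1 + G.adjMatrix R) *ᵥ x := by
  rw [(isSymm_one.add G.isSymm_adjMatrix).dotProduct_mulVec_moveMass]
  have hquad :
      (1 + G.adjMatrix R) i i + (1 + G.adjMatrix R) j j - 2 * (1 + G.adjMatrix R) i j = 0 := by
    simp [h, h.ne, one_add_one_eq_two]
  rw [hquad, mul_zero, add_zero, add_le_iff_nonpos_right]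
  exact mul_nonpos_of_nonneg_of_nonpos (mul_nonneg zero_le_two (hx j)) (sub_nonpos.2 hle)

theorem exists_isIndepSet_support (s : Finset V) {x : V → R} (hx : 0 ≤ x)
    (hs : ∀ k ∉ s, x k = 0) :
    ∃ t : Finset V, ∃ y : V → R, G.IsIndepSet t ∧ (∀ k ∉ t, y k = 0) ∧ 0 ≤ y ∧
      ∑ k, y k = ∑ k, x k ∧
      y ⬝ᵥ (1 + G.adjMatrix R) *ᵥ y ≤ x ⬝ᵥ (1 + G.adjMatrix R) *ᵥ x := by
  induction s using Finset.strongInduction generalizing x with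
  | H s ih =>
  by_cases hind : G.IsIndepSet s
  · exact ⟨s, x, hind, hs, hx, rfl, le_rfl⟩
  obtain ⟨i, hi, j, hj, -, hij⟩ : ∃ i ∈ s, ∃ j ∈ s, i ≠ j ∧ G.Adj i j := by
    simpa [IsIndepSet, Set.Pairwise] using hind
  wlog hle : ((1 + G.adjMatrix R) *ᵥ x) i ≤ ((1 + G.adjMatrix R) *ᵥ x) j generalizing i j
  · exact this j hj i hi hij.symm (le_of_not_ge hle)
  have hsupp : ∀ k ∉ s.erase j, moveMass x j i k = 0 := by
    intro k hk
    by_cases hkj : k = j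
    · subst hkj; exact moveMass_apply_source hij.ne
    have hks : k ∉ s := fun hks => hk (mem_erase.2 ⟨hkj, hks⟩)
    rw [moveMass_apply_of_ne (ne_of_mem_of_not_mem hi hks).symm hkj, hs k hks]
  obtain ⟨t, y, ht, hyt, hy, hsum, hle'⟩ :=
    ih _ (erase_ssubset hj) (moveMass_nonneg hx hij.ne) hsupp
  exact ⟨t, y, ht, hyt, hy, hsum.trans (sum_moveMass x j i),
    hle'.trans (hij.dotProduct_mulVec_moveMass_le hx hle)⟩

theorem sq_sum_le_indepNum_mul_dotProduct_one_add_adjMatrix_mulVec {x : V → R} (hx : 0 ≤ x) :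
    (∑ k, x k) ^ 2 ≤ G.indepNum * (x ⬝ᵥ (1 + G.adjMatrix R) *ᵥ x) := by
  obtain ⟨t, y, ht, hyt, -, hsum, hle⟩ := exists_isIndepSet_support (G := G) univ hx (by simp)
  rw [dotProduct_one_add_adjMatrix_mulVec_eq_sum_sq ht hyt] at hle
  have hyy : 0 ≤ ∑ k ∈ t, y k ^ 2 := sum_nonneg fun k _ => sq_nonneg (y k)
  calc (∑ k, x k) ^ 2 = (∑ k ∈ t, y k) ^ 2 := by
        rw [← hsum, sum_subset (subset_univ t) fun k _ hk => hyt k hk]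
    _ ≤ #t * ∑ k ∈ t, y k ^ 2 := sq_sum_le_card_mul_sum_sq
    _ ≤ G.indepNum * ∑ k ∈ t, y k ^ 2 := by gcongr; exact ht.card_le_indepNum
    _ ≤ G.indepNum * (x ⬝ᵥ (1 + G.adjMatrix R) *ᵥ x) := by gcongr

end SimpleGraph

/-- Motzkin–Straus: for a finite simple graph `G` with stability number `α`, adjacency
matrix `A`, identity `I` and all-ones matrix `J`, the matrix `Q(G) = α (I + A) − J` is
copositive. -/
theorem motzkinStraus_copositive (n : ℕ) (G : SimpleGraph (Fin n))
    [DecidableRel G.Adj] (α : ℕ)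
    (hα : IsGreatest
      {k | ∃ s : Finset (Fin n), s.card = k ∧ ∀ i ∈ s, ∀ j ∈ s, ¬ G.Adj i j} α)
    (x : Fin n → ℝ) (hx : ∀ i, 0 ≤ x i) :
    0 ≤ x ⬝ᵥ ((α : ℝ) • (1 + G.adjMatrix ℝ) - Matrix.of fun _ _ => 1).mulVec x := by
  have hindep : G.indepNum ≤ α := by
    obtain ⟨s, hs⟩ := G.exists_isNIndepSet_indepNum
    exact hs.card_eq ▸ hα.2 ⟨s, rfl, fun i hi j hj hij => hs.isIndepSet hi hj hij.ne hij⟩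
  have hJ : x ⬝ᵥ (Matrix.of fun _ _ => (1 : ℝ)) *ᵥ x = (∑ k, x k) ^ 2 := by
    simp [mulVec, dotProduct, sq, sum_mul]
  rw [sub_mulVec, dotProduct_sub, smul_mulVec, dotProduct_smul, hJ, smul_eq_mul, sub_nonneg]
  calc (∑ k, x k) ^ 2 ≤ G.indepNum * (x ⬝ᵥ (1 + G.adjMatrix ℝ) *ᵥ x) :=
        G.sq_sum_le_indepNum_mul_dotProduct_one_add_adjMatrix_mulVec hx
    _ ≤ α * (x ⬝ᵥ (1 + G.adjMatrix ℝ) *ᵥ x) := by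
        gcongr
        exact G.dotProduct_one_add_adjMatrix_mulVec_nonneg hx
end

section
/- Let f ∈ C^{2k−2}(ℝ) and suppose f is k-positive semidefinite, i.e., for all x1,...,xk ∈ ℝ the matrix (f(xi + xj))_{1≤i,j≤k} is positive semidefinite. Then for every x ∈ ℝ the Hankel matrix H_f(x) = (f^{(i+j−2)}(x))_{1≤i,j≤k} of derivatives is positive semidefinite. -/
open Matrix Filter Topology

/-!
Sample `f` at the points `yᵢ = x/2 + i h`, so that `yᵢ + yⱼ = x + (i + j) h`. Conjugating the
positive semidefinite matrix `(f (yᵢ + yⱼ))` by the signed Pascal matrix of binomial coefficients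
produces the Hankel matrix `(Δₕ^{m+n} f (x))` of iterated forward differences, and further by
`diag(h⁻ᵐ)` the matrix of difference quotients `(Δₕ^{m+n} f (x) / h^{m+n})`. By the mean value
theorem each difference quotient equals `f^{(m+n)}` at a point of `[x, x + (m+n) h]`, so these
matrices converge to the Hankel matrix of derivatives as `h → 0⁺`, and positive semidefinite
matrices form a closed set.
-/

theorem Matrix.isClosed_setOf_posSemidef {n : Type*} [Fintype n] :
    IsClosed {M : Matrix n n ℝ | M.PosSemidef} := by
  simp only [posSemidef_iff_dotProduct_mulVec, Set.ofPred_and, Set.ofPred_forall]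
  refine .inter (isClosed_eq (continuous_id.matrix_conjTranspose) continuous_id) ?_
  exact isClosed_iInter fun x => isClosed_le continuous_const
    (continuous_const.dotProduct (continuous_id.matrix_mulVec continuous_const))

theorem iteratedDeriv_fwdDiff {𝕜 F : Type*} [NontriviallyNormedField 𝕜] [NormedAddCommGroup F]
    [NormedSpace 𝕜 F] {n : ℕ} {f : 𝕜 → F} (hf : ContDiff 𝕜 n f) (h : 𝕜) :
    iteratedDeriv n (fwdDiff h f) = fwdDiff h (iteratedDeriv n f) := by
  have hshift : ContDiff 𝕜 n fun y => f (y + h) := hf.comp (contDiff_id.add contDiff_const)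
  funext y
  rw [show fwdDiff h f = (fun y => f (y + h)) - f from rfl,
    iteratedDeriv_sub hshift.contDiffAt hf.contDiffAt, iteratedDeriv_comp_add_const]
  rfl

theorem contDiff_fwdDiff {𝕜 F : Type*} [NontriviallyNormedField 𝕜] [NormedAddCommGroup F]
    [NormedSpace 𝕜 F] {n : WithTop ℕ∞} {f : 𝕜 → F} (hf : ContDiff 𝕜 n f) (h : 𝕜) :
    ContDiff 𝕜 n (fwdDiff h f) :=
  (hf.comp (contDiff_id.add contDiff_const)).sub hf

theorem exists_fwdDiff_iter_eq_pow_mul_iteratedDeriv {n : ℕ} {f : ℝ → ℝ} (hf : ContDiff ℝ n f)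
    (x : ℝ) {h : ℝ} (hh : 0 < h) :
    ∃ ξ ∈ Set.Icc x (x + n * h), (fwdDiff h)^[n] f x = h ^ n * iteratedDeriv n f ξ := by
  induction n generalizing f with
  | zero => exact ⟨x, by simp, by simp⟩
  | succ n ih =>
    have hf' : ContDiff ℝ n f := hf.of_le (by norm_cast; omega)
    obtain ⟨ξ, ⟨hxξ, hξ⟩, hΔ⟩ := ih (contDiff_fwdDiff hf' h)
    have hd : Differentiable ℝ (iteratedDeriv n f) := hf.differentiable_iteratedDeriv' n
    obtain ⟨η, ⟨hξη, hηh⟩, hη⟩ := exists_deriv_eq_slope (iteratedDeriv n f)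
      (lt_add_of_pos_right ξ hh) hd.continuous.continuousOn hd.differentiableOn
    rw [← iteratedDeriv_succ, add_sub_cancel_left, eq_div_iff hh.ne'] at hη
    refine ⟨η, ⟨by linarith, by push_cast; linarith⟩, ?_⟩
    rw [Function.iterate_succ_apply, hΔ, iteratedDeriv_fwdDiff hf', fwdDiff, ← hη]
    ring

theorem tendsto_fwdDiff_iter_div_pow {n : ℕ} {f : ℝ → ℝ} (hf : ContDiff ℝ n f) (x : ℝ) :
    Tendsto (fun h => (fwdDiff h)^[n] f x / h ^ n) (𝓝[>] 0) (𝓝 (iteratedDeriv n f x)) := by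
  choose! ξ hξ hΔ using fun h (hh : 0 < h) => exists_fwdDiff_iter_eq_pow_mul_iteratedDeriv hf x hh
  have hright : Tendsto (fun h : ℝ => x + n * h) (𝓝[>] 0) (𝓝 x) :=
    ((continuous_const.add (continuous_const.mul continuous_id)).tendsto' 0 x (by simp)).mono_left
      nhdsWithin_le_nhds
  have hξx : Tendsto ξ (𝓝[>] 0) (𝓝 x) :=
    tendsto_of_tendsto_of_tendsto_of_le_of_le' tendsto_const_nhds hright
      (eventually_nhdsWithin_of_forall fun h hh => (hξ h hh).1)
      (eventually_nhdsWithin_of_forall fun h hh => (hξ h hh).2)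
  refine (((hf.continuous_iteratedDeriv' n).tendsto x).comp hξx).congr' ?_
  filter_upwards [self_mem_nhdsWithin] with h hh
  rw [Function.comp_apply, hΔ h hh, mul_div_cancel_left₀ _ (pow_ne_zero _ (ne_of_gt hh))]

def fwdDiffMatrix (R : Type*) [Ring R] (k : ℕ) : Matrix (Fin k) (Fin k) R :=
  of fun m i => (-1) ^ (m - i : ℕ) * ((m : ℕ).choose i : R)

theorem fwdDiffMatrix_mulVec {R M : Type*} [CommRing R] [AddCommMonoid M] {k : ℕ} (g : M → R)
    (z h : M) (m : Fin k) :
    (fwdDiffMatrix R k *ᵥ fun i : Fin k => g (z + (i : ℕ) • h)) m = (fwdDiff h)^[m] g z := by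
  rw [fwdDiff_iter_eq_sum_shift, Finset.sum_subset (Finset.range_subset_range.2 m.isLt),
    ← Fin.sum_univ_eq_sum_range]
  · simp [mulVec, dotProduct, fwdDiffMatrix]
  · intro i _ hi
    simp [Nat.choose_eq_zero_of_lt (by simpa using hi : (m : ℕ) < i)]

theorem posSemidef_fwdDiff_iter_hankel {k : ℕ} {f : ℝ → ℝ}
    (hpsd : ∀ y : Fin k → ℝ, (of fun i j => f (y i + y j)).PosSemidef) (x h : ℝ) :
    (of fun m n : Fin k => (fwdDiff h)^[m + n] f x).PosSemidef := by
  convert (hpsd fun i => x / 2 + (i : ℕ) • h).mul_mul_conjTranspose_same (fwdDiffMatrix ℝ k)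
    using 1
  ext m n
  have hrow (i : Fin k) : ((of fun i j : Fin k => f (x / 2 + (i : ℕ) • h + (x / 2 + (j : ℕ) • h))) *
      (fwdDiffMatrix ℝ k)ᴴ) i n = (fwdDiff h)^[n] f (x + (i : ℕ) • h) := by
    rw [← fwdDiffMatrix_mulVec, mul_apply, mulVec, dotProduct]
    refine Finset.sum_congr rfl fun j _ => ?_
    rw [conjTranspose_apply, star_trivial, of_apply, mul_comm, add_add_add_comm, add_halves,
      add_assoc]
  rw [Matrix.mul_assoc, of_apply, Function.iterate_add_apply, ← fwdDiffMatrix_mulVec, mul_apply]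
  simp only [hrow]
  rfl

theorem posSemidef_fwdDiff_iter_div_pow_hankel {k : ℕ} {f : ℝ → ℝ}
    (hpsd : ∀ y : Fin k → ℝ, (of fun i j => f (y i + y j)).PosSemidef) (x h : ℝ) :
    (of fun m n : Fin k => (fwdDiff h)^[m + n] f x / h ^ (m + n : ℕ)).PosSemidef := by
  convert (posSemidef_fwdDiff_iter_hankel hpsd x h).mul_mul_conjTranspose_same
    (diagonal fun m : Fin k => (h ^ (m : ℕ))⁻¹) using 1
  ext m n
  simp only [of_apply, diagonal_mul, diagonal_conjTranspose, mul_diagonal, star_trivial,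
    pow_add, mul_inv, div_eq_mul_inv]
  ring

theorem hankel_posSemidef_of_kPosSemidef_general (k : ℕ) (f : ℝ → ℝ)
    (hf : ContDiff ℝ (2 * k - 2 : ℕ) f)
    (hpsd : ∀ x : Fin k → ℝ, (Matrix.of fun i j => f (x i + x j)).PosSemidef) :
    ∀ x : ℝ,
      (Matrix.of fun i j : Fin k => iteratedDeriv (i.1 + j.1) f x).PosSemidef := by
  intro x
  have hlim : Tendsto (fun h => of fun m n : Fin k => (fwdDiff h)^[m + n] f x / h ^ (m + n : ℕ))
      (𝓝[>] 0) (𝓝 (of fun i j : Fin k => iteratedDeriv (i.1 + j.1) f x)) :=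
    tendsto_pi_nhds.2 fun m => tendsto_pi_nhds.2 fun n =>
      tendsto_fwdDiff_iter_div_pow (hf.of_le (by norm_cast; omega)) x
  exact isClosed_setOf_posSemidef.mem_of_tendsto hlim
    (.of_forall fun h => posSemidef_fwdDiff_iter_div_pow_hankel hpsd x h)

/-- If `f ∈ C^{2k−2}(ℝ)` is `k`-positive semidefinite (all matrices `(f(xᵢ + xⱼ))` of
order `k` are positive semidefinite), then for every `x ∈ ℝ` the Hankel matrix
`H_f(x) = (f^{(i+j−2)}(x))_{1 ≤ i,j ≤ k}` is positive semidefinite. -/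
theorem hankel_posSemidef_of_kPosSemidef (k : ℕ) (hk : 0 < k) (f : ℝ → ℝ)
    (hf : ContDiff ℝ (2 * k - 2 : ℕ) f)
    (hpsd : ∀ x : Fin k → ℝ, (Matrix.of fun i j => f (x i + x j)).PosSemidef) :
    ∀ x : ℝ,
      (Matrix.of fun i j : Fin k => iteratedDeriv (i.1 + j.1) f x).PosSemidef :=
  hankel_posSemidef_of_kPosSemidef_general k f hf hpsd
end

section
/- Fix 0 < a1 < ... < ak and let g(x) = ∑_{m=1}^k exp(a_m x). For every ε > 0 the function f_ε(x) = g(x) + g(−x) − ε is not (k+1)-positive semidefinite: there exist pairwise distinct x1,...,x_{k+1} ∈ ℝ such that the matrix (f_ε(xi + xj))_{1≤i,j≤k+1} is not positive semidefinite. -/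
/-!
Let `p = ∏ₘ (X - exp aₘ)`, of degree `k`, with coefficient vector `c`, and take the points
`xᵢ = X + i`. Then `∑ᵢ cᵢ exp (y xᵢ) = exp (y X) p(exp y)`, so the quadratic form of the Hankel
matrix at `c` is `∑ₘ (exp (-aₘ X) p(exp (-aₘ)))² - ε p(1)²`: the growing modes `exp (aₘ x)` are
killed because `p` vanishes at `exp aₘ`, the decaying ones tend to `0` as `X → ∞`, and
`p(1) ≠ 0` because every `aₘ > 0`.
-/

open Matrix Finset Filter Topology Polynomial Real

section

variable {κ n : Type*} [Fintype κ]

/-- The Hankel matrix `(f (xᵢ + xⱼ))ᵢⱼ` of `f = ∑ₘ exp (bₘ ·) - ε`. -/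
noncomputable def expHankel (b : κ → ℝ) (ε : ℝ) (x : n → ℝ) : Matrix n n ℝ :=
  of fun i j => ∑ m, exp (b m * (x i + x j)) - ε

theorem expHankel_sumElim_neg {k : ℕ} (a : Fin k → ℝ) (ε : ℝ) (x : n → ℝ) :
    expHankel (Sum.elim a (-a)) ε x = of fun i j =>
      (∑ m, exp (a m * (x i + x j))) + (∑ m, exp (-(a m) * (x i + x j))) - ε := by
  ext i j
  simp [expHankel, Fintype.sum_sum_type]

theorem dotProduct_expHankel_mulVec [Fintype n] (b : κ → ℝ) (ε : ℝ) (x c : n → ℝ) :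
    c ⬝ᵥ (expHankel b ε x *ᵥ c) = ∑ m, (∑ i, c i * exp (b m * x i)) ^ 2 - ε * (∑ i, c i) ^ 2 := by
  simp only [expHankel, dotProduct, mulVec, of_apply, mul_add, exp_add, sq, mul_sum, sum_mul,
    mul_sub, sub_mul, sum_sub_distrib]
  congr 1
  · rw [Finset.sum_comm_cycle]
    exact Finset.sum_congr rfl fun m _ => Finset.sum_congr rfl fun i _ =>
      Finset.sum_congr rfl fun j _ => by ring
  · rw [Finset.sum_comm]
    exact Finset.sum_congr rfl fun i _ => Finset.sum_congr rfl fun j _ => by ring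

theorem sum_coeff_mul_exp_add_natCast {k : ℕ} {p : ℝ[X]} (hp : p.natDegree ≤ k) (y X : ℝ) :
    ∑ i : Fin (k + 1), p.coeff i * exp (y * (X + (i : ℕ))) = exp (y * X) * p.eval (exp y) := by
  rw [eval_eq_sum_range' (Nat.lt_succ_of_le hp), ← Fin.sum_univ_eq_sum_range, mul_sum]
  refine Finset.sum_congr rfl fun i _ => ?_
  rw [mul_add, exp_add, ← exp_nat_mul, mul_comm (i : ℝ) y]
  ring

theorem coeff_dotProduct_expHankel_mulVec {k : ℕ} {p : ℝ[X]} (hp : p.natDegree ≤ k)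
    (b : κ → ℝ) (ε X : ℝ) :
    (fun i : Fin (k + 1) => p.coeff i) ⬝ᵥ
        (expHankel b ε (fun i => X + (i : ℕ)) *ᵥ fun i => p.coeff i)
      = ∑ m, (exp (b m * X) * p.eval (exp (b m))) ^ 2 - ε * p.eval 1 ^ 2 := by
  have hsum : ∑ i : Fin (k + 1), p.coeff i = p.eval 1 := by
    simpa using sum_coeff_mul_exp_add_natCast hp 0 0
  rw [dotProduct_expHankel_mulVec, hsum]
  simp only [sum_coeff_mul_exp_add_natCast hp]

theorem tendsto_sum_sq_exp_neg_mul_atTop {b : κ → ℝ} (hb : ∀ m, 0 < b m) (d : κ → ℝ) :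
    Tendsto (fun X => ∑ m, (exp (-b m * X) * d m) ^ 2) atTop (𝓝 0) := by
  have h (m : κ) : Tendsto (fun X => (exp (-b m * X) * d m) ^ 2) atTop (𝓝 0) := by
    simpa [neg_mul] using ((tendsto_exp_neg_atTop_nhds_zero.comp
      (tendsto_id.const_mul_atTop (hb m))).mul_const (d m)).pow 2
  simpa using tendsto_finsetSum univ fun m _ => h m

end

theorem f_eps_not_kplusone_posSemidef_general (k : ℕ) (a : Fin k → ℝ)
    (hpos : ∀ m, 0 < a m) (ε : ℝ) (hε : 0 < ε) :
    ∃ x : Fin (k + 1) → ℝ, Function.Injective x ∧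
      ¬ (Matrix.of fun i j : Fin (k + 1) =>
          (∑ m, Real.exp (a m * (x i + x j)))
            + (∑ m, Real.exp (-(a m) * (x i + x j))) - ε).PosSemidef := by
  set p := Lagrange.nodal univ fun m => exp (a m)
  have hdeg : p.natDegree ≤ k := by simp [p]
  have hroot (m : Fin k) : p.eval (exp (a m)) = 0 :=
    Lagrange.eval_nodal_at_node (v := fun m => exp (a m)) (mem_univ m)
  have hone : p.eval 1 ≠ 0 :=
    Lagrange.eval_nodal_not_at_node fun m _ => (one_lt_exp_iff.2 (hpos m)).ne
  obtain ⟨X, hX⟩ := ((tendsto_sum_sq_exp_neg_mul_atTop hpos fun m => p.eval (exp (-a m))).eventually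
    (gt_mem_nhds (by positivity : 0 < ε * p.eval 1 ^ 2))).exists
  refine ⟨fun i => X + (i : ℕ), fun i j h => by simpa [Fin.ext_iff] using h, fun hpsd => ?_⟩
  rw [← expHankel_sumElim_neg] at hpsd
  have hnonneg := hpsd.dotProduct_mulVec_nonneg fun i => p.coeff i
  rw [star_trivial, coeff_dotProduct_expHankel_mulVec hdeg, Fintype.sum_sum_type] at hnonneg
  simp only [Sum.elim_inl, Sum.elim_inr, Pi.neg_apply, hroot, mul_zero, zero_pow two_ne_zero,
    sum_const_zero, zero_add] at hnonneg
  linarith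

/-- Fix `0 < a₁ < ⋯ < a_k` and `g(x) = ∑ₘ exp(aₘ x)`.  For every `ε > 0` the function
`f_ε(x) = g(x) + g(−x) − ε` is not `(k+1)`-positive semidefinite: there are pairwise
distinct `x₁, …, x_{k+1}` such that `(f_ε(xᵢ + xⱼ))` is not positive semidefinite. -/
theorem f_eps_not_kplusone_posSemidef (k : ℕ) (a : Fin k → ℝ)
    (hpos : ∀ m, 0 < a m) (hmono : StrictMono a) (ε : ℝ) (hε : 0 < ε) :
    ∃ x : Fin (k + 1) → ℝ, Function.Injective x ∧
      ¬ (Matrix.of fun i j : Fin (k + 1) =>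
          (∑ m, Real.exp (a m * (x i + x j)))
            + (∑ m, Real.exp (-(a m) * (x i + x j))) - ε).PosSemidef :=
  f_eps_not_kplusone_posSemidef_general k a hpos ε hε
end

section
/- Let S ⊂ ℤ_{≥0}^n be finite, let T2 = ℤ_{≥0}^n ∩ (½ conv(S)) and T1 = ℤ_{≥0}^n ∩ conv(S). If a polynomial p supported on S is a sum of squares of real polynomials, then p is a sum of at most |T1| squares of polynomials supported on T2. -/
open MvPolynomial Pointwise

/-!
If `p = ∑ gᵢ²` and `u` is a vertex of the convex hull of all exponents of the `gᵢ`, then the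
coefficient of `2u` in `p` is `∑ coeff u (gᵢ)² > 0`, because `2u` has no other decomposition as a
sum of two such exponents. So every vertex, hence every exponent of every `gᵢ`, lies in
`½ conv(S)`. The squares `gᵢ²` then lie in the `|T₁|`-dimensional space of polynomials supported
on `T₁`, and the conic Carathéodory theorem rewrites `p = ∑ gᵢ²` as `∑ dᵢ gᵢ²` with `dᵢ ≥ 0` over
at most `|T₁|` linearly independent squares; finally `dᵢ gᵢ² = (√dᵢ • gᵢ)²`.
-/

theorem eq_of_mem_extremePoints_of_add_eq_add_self {𝕜 E : Type*} [Field 𝕜] [LinearOrder 𝕜]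
    [IsStrictOrderedRing 𝕜] [AddCommGroup E] [Module 𝕜 E] {A : Set E} {a b x : E}
    (hx : x ∈ A.extremePoints 𝕜) (ha : a ∈ A) (hb : b ∈ A) (hab : a + b = x + x) : a = x := by
  have hmid : midpoint 𝕜 a b = x := by
    rw [midpoint_eq_smul_add, hab, ← two_smul 𝕜 x, smul_smul, invOf_mul_self, one_smul]
  exact hx.2 ha hb (hmid ▸ midpoint_mem_openSegment a b)

theorem Set.Finite.convexHull_subset_of_extremePoints_subset {E : Type*} [AddCommGroup E]
    [Module ℝ E] [TopologicalSpace E] [T2Space E] [IsTopologicalAddGroup E] [ContinuousSMul ℝ E]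
    [LocallyConvexSpace ℝ E] {U C : Set E} (hU : U.Finite) (hC : Convex ℝ C)
    (h : (convexHull ℝ U).extremePoints ℝ ⊆ C) : convexHull ℝ U ⊆ C := by
  have hext : ((convexHull ℝ U).extremePoints ℝ).Finite := hU.subset extremePoints_convexHull_subset
  rw [← closure_convexHull_extremePoints (hU.isCompact_convexHull ℝ) (convex_convexHull ℝ U),
    (hext.isClosed_convexHull ℝ).closure_eq]
  exact convexHull_min h hC

theorem Convex.add_mem_of_mem_inv_two_smul {E : Type*} [AddCommGroup E] [Module ℝ E] {C : Set E}
    (hC : Convex ℝ C) {x y : E} (hx : x ∈ (2 : ℝ)⁻¹ • C) (hy : y ∈ (2 : ℝ)⁻¹ • C) : x + y ∈ C := by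
  have h := hC.add_smul (inv_nonneg.2 zero_le_two) (inv_nonneg.2 zero_le_two) ▸
    Set.add_mem_add hx hy
  rwa [← two_mul, mul_inv_cancel₀ two_ne_zero, one_smul] at h

theorem LinearIndepOn.card_le_finrank_of_forall_mem {R V ι : Type*} [Ring R] [StrongRankCondition R]
    [AddCommGroup V] [Module R V] {W : Submodule R V} [Module.Finite R W] {v : ι → V}
    {t : Finset ι} (ht : LinearIndepOn R v t) (hW : ∀ i ∈ t, v i ∈ W) :
    t.card ≤ Module.finrank R W := by
  have hw : LinearIndependent R fun i : t => (⟨v i, hW i i.2⟩ : W) :=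
    LinearIndependent.of_comp W.subtype ht
  simpa using hw.fintype_card_le_finrank

section Caratheodory

variable {𝕜 V ι : Type*} [Field 𝕜] [LinearOrder 𝕜] [IsStrictOrderedRing 𝕜]
  [AddCommGroup V] [Module 𝕜 V]

theorem exists_mem_nonneg_sum_smul_erase_eq [DecidableEq ι] {v : ι → V} {s : Finset ι}
    (hv : ¬ LinearIndepOn 𝕜 v s) {c : ι → 𝕜} (hc : ∀ i ∈ s, 0 ≤ c i) :
    ∃ j ∈ s, ∃ d : ι → 𝕜, (∀ i ∈ s.erase j, 0 ≤ d i) ∧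
      ∑ i ∈ s.erase j, d i • v i = ∑ i ∈ s, c i • v i := by
  obtain ⟨a, ha, i₀, hi₀, ha₀⟩ := not_linearIndepOn_finset_iff.mp hv
  wlog hpos : 0 < a i₀ generalizing a
  · exact this (-a) (by simp [neg_smul, ha]) (neg_ne_zero.2 ha₀)
      (neg_pos.2 (lt_of_le_of_ne (not_lt.1 hpos) ha₀))
  obtain ⟨j, hj, hmin⟩ := (s.filter (0 < a ·)).exists_min_image (fun i => c i / a i)
    ⟨i₀, Finset.mem_filter.2 ⟨hi₀, hpos⟩⟩
  obtain ⟨hjs, haj⟩ := Finset.mem_filter.1 hj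
  -- the largest step along the relation `a` keeping every coefficient `c i - μ * a i` nonnegative
  set μ := c j / a j
  refine ⟨j, hjs, fun i => c i - μ * a i, fun i hi => ?_, ?_⟩
  · have his := Finset.mem_of_mem_erase hi
    rcases le_or_gt (a i) 0 with hai | hai
    · nlinarith [hc i his, div_nonneg (hc j hjs) haj.le]
    · have := (le_div_iff₀ hai).1 (hmin i (Finset.mem_filter.2 ⟨his, hai⟩))
      linarith
  · have hdj : (c j - μ * a j) • v j = 0 := by
      rw [div_mul_cancel₀ _ haj.ne', sub_self, zero_smul]
    rw [Finset.sum_erase s hdj]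
    simp only [sub_smul, mul_smul, Finset.sum_sub_distrib, ← Finset.smul_sum, ha, smul_zero,
      sub_zero]

theorem exists_linearIndepOn_nonneg_sum_smul_eq (v : ι → V) (s : Finset ι) (c : ι → 𝕜)
    (hc : ∀ i ∈ s, 0 ≤ c i) :
    ∃ t ⊆ s, LinearIndepOn 𝕜 v t ∧
      ∃ d : ι → 𝕜, (∀ i ∈ t, 0 ≤ d i) ∧ ∑ i ∈ t, d i • v i = ∑ i ∈ s, c i • v i := by
  classical
  induction s using Finset.strongInduction generalizing c with
  | H s ih =>
  by_cases hv : LinearIndepOn 𝕜 v s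
  · exact ⟨s, subset_rfl, hv, c, hc, rfl⟩
  obtain ⟨j, hj, d, hd, hsum⟩ := exists_mem_nonneg_sum_smul_erase_eq hv hc
  obtain ⟨t, hts, ht, e, he, hsum'⟩ := ih _ (Finset.erase_ssubset hj) d hd
  exact ⟨t, hts.trans (s.erase_subset j), ht, e, he, hsum'.trans hsum⟩

end Caratheodory

theorem exists_fin_sum_sq_eq {A ι : Type*} [CommRing A] [Algebra ℝ A] {X W : Submodule ℝ A}
    [FiniteDimensional ℝ W] (hXW : ∀ q ∈ X, q ^ 2 ∈ W) {N : ℕ} (hN : Module.finrank ℝ W ≤ N)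
    (s : Finset ι) (q : ι → A) (hq : ∀ i ∈ s, q i ∈ X) :
    ∃ g : Fin N → A, (∀ j, g j ∈ X) ∧ ∑ j, g j ^ 2 = ∑ i ∈ s, q i ^ 2 := by
  obtain ⟨t, hts, ht, d, hd, hsum⟩ :=
    exists_linearIndepOn_nonneg_sum_smul_eq (fun i => q i ^ 2) s 1 fun _ _ => zero_le_one (α := ℝ)
  simp only [Pi.one_apply, one_smul] at hsum
  -- write `N = t.card + r` and pad the `t.card` square roots with `r` zeros
  obtain ⟨r, rfl⟩ := Nat.exists_eq_add_of_le <|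
    (ht.card_le_finrank_of_forall_mem fun i hi => hXW _ (hq i (hts hi))).trans hN
  let root : t → A := fun i => √(d i) • q i
  have hroot : ∀ i : t, root i ^ 2 = d i • q i ^ 2 := fun i => by
    rw [smul_pow, Real.sq_sqrt (hd i i.2)]
  refine ⟨Fin.append (root ∘ t.equivFin.symm) 0, fun j => ?_, ?_⟩
  · refine Fin.addCases (fun k => ?_) (fun k => ?_) j
    · simpa [root] using X.smul_mem _ (hq _ (hts (t.equivFin.symm k).2))
    · simp
  · rw [Fin.sum_univ_add, ← hsum]
    simp only [Fin.append_left, Fin.append_right, Function.comp_apply, hroot, Pi.zero_apply,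
      zero_pow two_ne_zero, Finset.sum_const_zero, add_zero]
    rw [t.equivFin.symm.sum_comp (fun i : t => d i • q i ^ 2)]
    exact Finset.sum_coe_sort t fun i => d i • q i ^ 2

namespace MvPolynomial

variable {σ : Type*}

def exponentVec : (σ →₀ ℕ) →+ (σ → ℝ) where
  toFun t i := t i
  map_zero' := by ext; simp
  map_add' _ _ := by ext; simp

theorem exponentVec_apply (t : σ →₀ ℕ) (i : σ) : exponentVec t i = t i := rfl

theorem exponentVec_injective : Function.Injective (exponentVec (σ := σ)) := fun _ _ h =>
  Finsupp.ext fun i => by simpa [exponentVec_apply] using congrFun h i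

theorem exponentVec_le_exponentVec_iff {a b : σ →₀ ℕ} : exponentVec a ≤ exponentVec b ↔ a ≤ b := by
  simp [Pi.le_def, Finsupp.le_def, exponentVec_apply]

theorem finite_setOf_exponentVec_mem_convexHull (S : Finset (σ →₀ ℕ)) :
    {t | exponentVec t ∈ convexHull ℝ (exponentVec '' (S : Set (σ →₀ ℕ)))}.Finite := by
  classical
  have hS : convexHull ℝ (exponentVec '' (S : Set (σ →₀ ℕ))) ⊆ Set.Iic (exponentVec (S.sup id)) :=
    convexHull_min (Set.image_subset_iff.2 fun s hs =>
      exponentVec_le_exponentVec_iff.2 (S.le_sup (f := id) hs)) (convex_Iic _)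
  exact (Set.finite_Iic (S.sup id)).subset fun t ht => exponentVec_le_exponentVec_iff.1 (hS ht)

theorem coeff_add_self_mul_of_mem_extremePoints {R : Type*} [CommSemiring R]
    {U : Set (σ →₀ ℕ)} {p q : MvPolynomial σ R} (hp : ↑p.support ⊆ U) (hq : ↑q.support ⊆ U)
    {t : σ →₀ ℕ} (ht : exponentVec t ∈ (convexHull ℝ (exponentVec '' U)).extremePoints ℝ) :
    coeff (t + t) (p * q) = coeff t p * coeff t q := by
  classical
  rw [coeff_mul, Finset.sum_eq_single (t, t)]
  · rintro ⟨a, b⟩ hab hne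
    by_contra h
    have ha : a ∈ p.support := mem_support_iff.2 (left_ne_zero_of_mul h)
    have hb : b ∈ q.support := mem_support_iff.2 (right_ne_zero_of_mul h)
    have hab' : exponentVec a + exponentVec b = exponentVec t + exponentVec t := by
      rw [← map_add, ← map_add, Finset.HasAntidiagonal.mem_antidiagonal.1 hab]
    have hA : ∀ c ∈ (U : Set (σ →₀ ℕ)), exponentVec c ∈ convexHull ℝ (exponentVec '' U) :=
      fun c hc => subset_convexHull ℝ _ ⟨c, hc, rfl⟩
    have hat := eq_of_mem_extremePoints_of_add_eq_add_self ht (hA a (hp ha)) (hA b (hq hb)) hab'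
    have hbt := eq_of_mem_extremePoints_of_add_eq_add_self ht (hA b (hq hb)) (hA a (hp ha))
      ((add_comm _ _).trans hab')
    exact hne (Prod.ext (exponentVec_injective hat) (exponentVec_injective hbt))
  · exact fun h => (h (Finset.HasAntidiagonal.mem_antidiagonal.2 rfl)).elim

theorem exponentVec_mem_inv_two_smul_convexHull_support_sum_sq {R ι : Type*} [CommRing R]
    [LinearOrder R] [IsStrictOrderedRing R] (s : Finset ι) (g : ι → MvPolynomial σ R) {i : ι}
    (hi : i ∈ s) {t : σ →₀ ℕ} (ht : t ∈ (g i).support) :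
    exponentVec t ∈ (2 : ℝ)⁻¹ • convexHull ℝ (exponentVec '' ↑(∑ i ∈ s, g i ^ 2).support) := by
  classical
  set U : Set (σ →₀ ℕ) := ⋃ i ∈ s, ↑(g i).support
  have hU : ∀ i ∈ s, ↑(g i).support ⊆ U := fun i hi =>
    Set.subset_biUnion_of_mem (u := fun i => ((g i).support : Set (σ →₀ ℕ))) hi
  suffices convexHull ℝ (exponentVec '' U) ⊆
      (2 : ℝ)⁻¹ • convexHull ℝ (exponentVec '' ↑(∑ i ∈ s, g i ^ 2).support) from
    this (subset_convexHull ℝ _ ⟨t, hU i hi ht, rfl⟩)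
  refine ((s.finite_toSet.biUnion fun i _ => (g i).support.finite_toSet).image _
    ).convexHull_subset_of_extremePoints_subset ((convex_convexHull ℝ _).smul _) fun x hx => ?_
  obtain ⟨u, hu, rfl⟩ := extremePoints_convexHull_subset hx
  obtain ⟨j, hj, huj⟩ := Set.mem_iUnion₂.1 hu
  have hcoeff : coeff (u + u) (∑ i ∈ s, g i ^ 2) = ∑ i ∈ s, coeff u (g i) ^ 2 := by
    simp only [coeff_sum, sq]
    exact Finset.sum_congr rfl fun i hi =>
      coeff_add_self_mul_of_mem_extremePoints (hU i hi) (hU i hi) hx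
  have hpos : 0 < ∑ i ∈ s, coeff u (g i) ^ 2 :=
    Finset.sum_pos' (fun i _ => sq_nonneg _) ⟨j, hj, sq_pos_iff.2 (mem_support_iff.1 huj)⟩
  rw [Set.mem_inv_smul_set_iff₀ two_ne_zero, two_smul, ← map_add]
  exact subset_convexHull ℝ _ ⟨u + u, mem_support_iff.2 (hcoeff ▸ hpos.ne'), rfl⟩

theorem sq_mem_restrictSupport_of_convex {R : Type*} [CommSemiring R] {C : Set (σ → ℝ)}
    (hC : Convex ℝ C) {f : MvPolynomial σ R}
    (hf : f ∈ restrictSupport R {t | exponentVec t ∈ (2 : ℝ)⁻¹ • C}) :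
    f ^ 2 ∈ restrictSupport R {t | exponentVec t ∈ C} := by
  refine restrictSupport_mono R (Set.add_subset_iff.2 fun a ha b hb => ?_)
    (restrictSupport_add R _ _ ▸ sq f ▸ Submodule.mul_mem_mul hf hf)
  simpa only [Set.mem_ofPred_eq, map_add] using hC.add_mem_of_mem_inv_two_smul ha hb

theorem finrank_restrictSupport {R : Type*} [CommRing R] [StrongRankCondition R]
    (s : Set (σ →₀ ℕ)) : Module.finrank R (restrictSupport R s) = s.ncard :=
  Module.finrank_eq_nat_card_basis (basisRestrictSupport R s)

end MvPolynomial

/-- Let `S ⊂ ℤ_{≥0}^n` be finite, `T₁ = ℤ_{≥0}^n ∩ conv(S)`, and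
`T₂ = ℤ_{≥0}^n ∩ (½ conv(S))`.  If a polynomial `p` supported on `S` is a sum of squares
of real polynomials, then `p` is a sum of at most `|T₁|` squares of polynomials
supported on `T₂`. -/
theorem sos_supported_caratheodory (n : ℕ) (S : Finset (Fin n →₀ ℕ))
    (p : MvPolynomial (Fin n) ℝ)
    (hsupp : (p.support : Set (Fin n →₀ ℕ)) ⊆ (S : Set (Fin n →₀ ℕ)))
    (hsos : ∃ (m : ℕ) (g : Fin m → MvPolynomial (Fin n) ℝ), p = ∑ i, g i ^ 2) :
    ∃ g : Fin ({t : Fin n →₀ ℕ |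
          (fun i => (t i : ℝ)) ∈
            convexHull ℝ ((fun s : Fin n →₀ ℕ => fun i => (s i : ℝ)) '' S)}.ncard)
        → MvPolynomial (Fin n) ℝ,
      (∀ i, ∀ t ∈ (g i).support,
        (fun j => (t j : ℝ)) ∈
          (2 : ℝ)⁻¹ • convexHull ℝ ((fun s : Fin n →₀ ℕ => fun i => (s i : ℝ)) '' S)) ∧
      p = ∑ i, g i ^ 2 := by
  obtain ⟨m, q, rfl⟩ := hsos
  let C := convexHull ℝ (exponentVec '' (S : Set (Fin n →₀ ℕ)))
  have hq : ∀ i ∈ Finset.univ, q i ∈ restrictSupport ℝ {t | exponentVec t ∈ (2 : ℝ)⁻¹ • C} :=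
    fun i hi t ht => Set.smul_set_mono (convexHull_mono (Set.image_mono hsupp))
      (exponentVec_mem_inv_two_smul_convexHull_support_sum_sq _ q hi ht)
  have : Finite {t | exponentVec t ∈ C} := (finite_setOf_exponentVec_mem_convexHull S).to_subtype
  have : FiniteDimensional ℝ (restrictSupport ℝ {t | exponentVec t ∈ C}) :=
    Module.Finite.of_basis (basisRestrictSupport ℝ _)
  obtain ⟨g, hg, hsum⟩ := exists_fin_sum_sq_eq (fun f => sq_mem_restrictSupport_of_convex
    (convex_convexHull ℝ _)) (finrank_restrictSupport _).le Finset.univ q hq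
  exact ⟨g, fun j t ht => hg j ht, hsum.symm⟩
end
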